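/- Suppose q_v > 0 for all v. Let q_min = min_{v∈V} q_v, q_max = max_{v∈V} q_v, and ξ = q_max/q_min. If b := max_{v∈V} Σ_{w∈N_v} λ_w/(1+λ_w) < 1, then the mixing time of the parallel Glauber dynamics satisfies T_mix ≤ ⌈log(nξe) / (q_min(1−b))⌉. -/

import Mathlib

/-!
A step of the dynamics is a deterministic function of a decision schedule `m` drawn from `q` and
an independent coin at every vertex: a vertex of `m` becomes active iff its coin says so and none
of its neighbours is active. Running two copies from `x` and `y` on the same randomness,
a vertex `v` disagrees after a step only if it was not selected and already disagreed, or it was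
selected, its coin said "activate" and exactly one copy has an active neighbour, which needs a
disagreeing neighbour. So the disagreement probabilities satisfy
`d_v(t+1) ≤ (1 - q_v) d_v(t) + q_v λ_v/(1+λ_v) Σ_{w ∼ v} d_w(t)`, and the potential
`Σ_v d_v(t) / q_v` shrinks by the factor `1 - q_min (1 - b)` at every step, starting from at most
`n / q_min`. By the coupling inequality the laws from `x` and `y` are within
`Σ_v d_v(t) ≤ q_max Σ_v d_v(t) / q_v ≤ n ξ (1 - q_min (1 - b))^t` in total variation; averaging
`y` over `π`, which is reversible for each independent decision schedule separately, bounds the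
distance to `π`.
-/

open Finset

variable {V : Type*} [Fintype V] [DecidableEq V]

/-- A finite set of vertices is independent in `G`. -/
def IsInd (G : SimpleGraph V) [DecidableRel G.Adj] (s : Finset V) : Prop :=
  ∀ v ∈ s, ∀ w ∈ s, ¬ G.Adj v w

instance (G : SimpleGraph V) [DecidableRel G.Adj] (s : Finset V) :
    Decidable (IsInd G s) := by
  unfold IsInd; infer_instance

/-- `q_v`: probability that vertex `v` belongs to the decision schedule. -/
noncomputable def qVert (q : Finset V → ℝ) (v : V) : ℝ :=
  ∑ m ∈ univ.filter (fun m => v ∈ m), q m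

/-- Per-vertex factor of the transition probability of the parallel Glauber
dynamics, given current schedule `σ`, decision schedule `m`, next schedule `σ'`. -/
noncomputable def stepFactor (G : SimpleGraph V) [DecidableRel G.Adj] (lam : V → ℝ)
    (σ m σ' : Finset V) (v : V) : ℝ :=
  if v ∈ m then
    (if ∃ w ∈ σ, G.Adj v w then (if v ∈ σ' then 0 else 1)
     else (if v ∈ σ' then lam v / (1 + lam v) else 1 / (1 + lam v)))
  else (if (v ∈ σ' ↔ v ∈ σ) then 1 else 0)

/-- Transition matrix of the parallel Glauber dynamics. -/
noncomputable def pgdP (G : SimpleGraph V) [DecidableRel G.Adj] (lam : V → ℝ)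
    (q : Finset V → ℝ) (σ σ' : Finset V) : ℝ :=
  ∑ m : Finset V, q m * ∏ v : V, stepFactor G lam σ m σ' v

/-- Distribution at time `t` of a Markov chain with transition matrix `P`
started at state `x`. -/
noncomputable def chainDist {S : Type*} [Fintype S] [DecidableEq S]
    (P : S → S → ℝ) (x : S) : ℕ → S → ℝ
  | 0 => fun s => if s = x then 1 else 0
  | t + 1 => fun s => ∑ s' : S, chainDist P x t s' * P s' s

/-- `t`-step transition probabilities. -/
noncomputable def chainPow {S : Type*} [Fintype S] [DecidableEq S]
    (P : S → S → ℝ) : ℕ → S → S → ℝ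
  | 0 => fun x y => if x = y then 1 else 0
  | t + 1 => fun x y => ∑ z : S, chainPow P t x z * P z y

/-- Total variation distance between two distributions on a finite set. -/
noncomputable def tvDist {S : Type*} [Fintype S] (μ ν : S → ℝ) : ℝ :=
  (1 / 2) * ∑ s : S, |μ s - ν s|

/-- The product-form distribution on independent sets with fugacities `lam`. -/
noncomputable def prodForm (G : SimpleGraph V) [DecidableRel G.Adj]
    (lam : V → ℝ) (σ : Finset V) : ℝ :=
  if IsInd G σ then
    (∏ v ∈ σ, lam v) / (∑ σ' ∈ univ.filter (fun s => IsInd G s), ∏ v ∈ σ', lam v)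
  else 0

/-- Mixing time: the maximum over starting states in `states` of the first time
the distribution is within `1/e` of `π` in total variation. -/
noncomputable def mixTime {S : Type*} [Fintype S] [DecidableEq S]
    (P : S → S → ℝ) (π : S → ℝ) (states : Finset S) : ℕ :=
  states.sup fun x => sInf {t : ℕ | tvDist (chainDist P x t) π ≤ 1 / Real.exp 1}

open scoped symmDiff

section MarkovChain

variable {S : Type*} [Fintype S]

lemma sum_mul_eq_of_reversible {P : S → S → ℝ} {π : S → ℝ}
    (hrev : ∀ x y, π x * P x y = π y * P y x) (hrow : ∀ x, ∑ y, P x y = 1) (y : S) :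
    ∑ x, π x * P x y = π y := by
  simp only [hrev _ y, ← mul_sum, hrow, mul_one]

lemma tvDist_le_sum_mul_tvDist (μ : S → ℝ) {ι : Type*} [Fintype ι] (π : ι → ℝ)
    (ν : ι → S → ℝ) (hπ0 : ∀ i, 0 ≤ π i) (hπ1 : ∑ i, π i = 1) :
    tvDist μ (fun s => ∑ i, π i * ν i s) ≤ ∑ i, π i * tvDist μ (ν i) := by
  have h : ∀ s, μ s - ∑ i, π i * ν i s = ∑ i, π i * (μ s - ν i s) := by
    intro s
    simp only [mul_sub, sum_sub_distrib, ← sum_mul, hπ1, one_mul]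
  unfold tvDist
  calc 1 / 2 * ∑ s, |μ s - ∑ i, π i * ν i s|
      ≤ 1 / 2 * ∑ s, ∑ i, π i * |μ s - ν i s| := by
        gcongr with s
        rw [h]
        refine (abs_sum_le_sum_abs _ _).trans_eq (sum_congr rfl fun i _ => ?_)
        rw [abs_mul, abs_of_nonneg (hπ0 i)]
    _ = ∑ i, π i * (1 / 2 * ∑ s, |μ s - ν i s|) := by
        rw [sum_comm, mul_sum]
        refine sum_congr rfl fun i _ => ?_
        rw [← mul_sum]
        ring

variable [DecidableEq S]

lemma chainDist_eq_chainPow (P : S → S → ℝ) (x : S) (t : ℕ) :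
    chainDist P x t = chainPow P t x := by
  induction t with
  | zero => funext s; simp [chainDist, chainPow, eq_comm]
  | succ t ih => funext s; simp [chainDist, chainPow, ih]

lemma chainPow_nonneg {P : S → S → ℝ} (hP : ∀ x y, 0 ≤ P x y) (t : ℕ) (x y : S) :
    0 ≤ chainPow P t x y := by
  induction t generalizing y with
  | zero => unfold chainPow; positivity
  | succ t ih => exact sum_nonneg fun z _ => mul_nonneg (ih z) (hP z y)

lemma sum_chainPow_zero_mul (P : S → S → ℝ) (x : S) (g : S → ℝ) :
    ∑ y, chainPow P 0 x y * g y = g x := by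
  simp [chainPow]

lemma sum_chainPow_succ_mul (P : S → S → ℝ) (t : ℕ) (x : S) (g : S → ℝ) :
    ∑ y, chainPow P (t + 1) x y * g y = ∑ z, chainPow P t x z * ∑ y, P z y * g y := by
  simp only [chainPow, sum_mul, mul_sum, mul_assoc]
  exact sum_comm

lemma sum_mul_chainPow_eq_of_stationary {P : S → S → ℝ} {π : S → ℝ}
    (hπ : ∀ y, ∑ x, π x * P x y = π y) (t : ℕ) (y : S) :
    ∑ x, π x * chainPow P t x y = π y := by
  induction t generalizing y with
  | zero => simp [chainPow]
  | succ t ih =>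
    simp only [chainPow, mul_sum, ← mul_assoc]
    rw [sum_comm]
    simp only [← sum_mul, ih, hπ]

lemma sum_abs_indicator_sub (a b : S) :
    ∑ s, |(if a = s then (1 : ℝ) else 0) - if b = s then 1 else 0| = if a = b then 0 else 2 := by
  split_ifs with hab
  · simp [hab]
  · have h : ∀ s, |(if a = s then (1 : ℝ) else 0) - if b = s then 1 else 0|
        = (if a = s then 1 else 0) + if b = s then 1 else 0 := by
      intro s
      by_cases ha : a = s <;> by_cases hb : b = s <;> simp_all
    simp only [h, sum_add_distrib, sum_ite_eq, mem_univ, if_true]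
    norm_num

lemma tvDist_le_of_coupling (ρ : S × S → ℝ) (hρ : ∀ p, 0 ≤ ρ p) :
    tvDist (fun s => ∑ p, ρ p * if p.1 = s then 1 else 0)
      (fun s => ∑ p, ρ p * if p.2 = s then 1 else 0)
      ≤ ∑ p, ρ p * if p.1 = p.2 then 0 else 1 := by
  calc tvDist (fun s => ∑ p, ρ p * if p.1 = s then 1 else 0)
        (fun s => ∑ p, ρ p * if p.2 = s then 1 else 0)
      ≤ 1 / 2 * ∑ s, ∑ p, ρ p *
          |(if p.1 = s then (1 : ℝ) else 0) - if p.2 = s then 1 else 0| := by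
        unfold tvDist
        gcongr with s
        rw [← sum_sub_distrib]
        refine (abs_sum_le_sum_abs _ _).trans_eq (sum_congr rfl fun p _ => ?_)
        rw [← mul_sub, abs_mul, abs_of_nonneg (hρ p)]
    _ = ∑ p, ρ p * if p.1 = p.2 then 0 else 1 := by
        rw [sum_comm, mul_sum]
        refine sum_congr rfl fun p _ => ?_
        rw [← mul_sum, sum_abs_indicator_sub]
        split_ifs <;> ring

lemma tvDist_chainDist_le_of_stationary (P : S → S → ℝ) {π : S → ℝ} (hπ0 : ∀ s, 0 ≤ π s)
    (hπ1 : ∑ s, π s = 1) (hπ : ∀ y, ∑ x, π x * P x y = π y) (x : S) (t : ℕ) {ε : ℝ}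
    (hε : ∀ y, tvDist (chainPow P t x) (chainPow P t y) ≤ ε) :
    tvDist (chainDist P x t) π ≤ ε := by
  have hπt : π = fun s => ∑ y, π y * chainPow P t y s :=
    funext fun s => (sum_mul_chainPow_eq_of_stationary hπ t s).symm
  rw [chainDist_eq_chainPow, hπt]
  refine (tvDist_le_sum_mul_tvDist _ π _ hπ0 hπ1).trans ?_
  calc ∑ y, π y * tvDist (chainPow P t x) (chainPow P t y) ≤ ∑ y, π y * ε := by
        gcongr with y
        exacts [hπ0 y, hε y]
    _ = ε := by rw [← sum_mul, hπ1, one_mul]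

end MarkovChain

section RandomMap

variable {Ω S T : Type*} [Fintype Ω] [DecidableEq S]

/-- The kernel of the chain `x ↦ f ω x` driven by noise `ω` of weight `μ ω`. -/
noncomputable def randomMapKernel (μ : Ω → ℝ) (f : Ω → S → S) (x y : S) : ℝ :=
  ∑ ω, if f ω x = y then μ ω else 0

lemma randomMapKernel_nonneg {μ : Ω → ℝ} (hμ : ∀ ω, 0 ≤ μ ω) (f : Ω → S → S) (x y : S) :
    0 ≤ randomMapKernel μ f x y :=
  sum_nonneg fun ω _ => by split_ifs <;> simp [hμ ω]

variable [Fintype S] [Fintype T] [DecidableEq T]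

/-- The grand coupling: both coordinates are driven by the same noise. -/
noncomputable def randomMapCoupling (μ : Ω → ℝ) (f : Ω → S → S) : S × S → S × S → ℝ :=
  randomMapKernel μ fun ω p => (f ω p.1, f ω p.2)

lemma sum_randomMapKernel_mul (μ : Ω → ℝ) (f : Ω → S → S) (x : S) (g : S → ℝ) :
    ∑ y, randomMapKernel μ f x y * g y = ∑ ω, μ ω * g (f ω x) := by
  simp only [randomMapKernel, sum_mul, ite_mul, zero_mul]
  rw [sum_comm]
  simp

lemma sum_chainPow_randomMapKernel_comp (μ : Ω → ℝ) {F : Ω → S → S} {f : Ω → T → T}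
    {h : S → T} (hh : ∀ ω x, h (F ω x) = f ω (h x)) (t : ℕ) (x : S) (g : T → ℝ) :
    ∑ x', chainPow (randomMapKernel μ F) t x x' * g (h x')
      = ∑ y, chainPow (randomMapKernel μ f) t (h x) y * g y := by
  induction t generalizing g with
  | zero => rw [sum_chainPow_zero_mul, sum_chainPow_zero_mul]
  | succ t ih =>
    simp only [sum_chainPow_succ_mul, sum_randomMapKernel_mul, hh]
    exact ih fun y => ∑ ω, μ ω * g (f ω y)

lemma chainPow_randomMapKernel_eq_fst (μ : Ω → ℝ) (f : Ω → S → S) (t : ℕ) (x y s : S) :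
    chainPow (randomMapKernel μ f) t x s
      = ∑ p, chainPow (randomMapCoupling μ f) t (x, y) p * if p.1 = s then 1 else 0 := by
  have h := sum_chainPow_randomMapKernel_comp μ (F := fun ω p => (f ω p.1, f ω p.2))
    (h := Prod.fst) (fun _ _ => rfl) t (x, y) fun s' => if s' = s then (1 : ℝ) else 0
  simpa [randomMapCoupling] using h.symm

lemma chainPow_randomMapKernel_eq_snd (μ : Ω → ℝ) (f : Ω → S → S) (t : ℕ) (x y s : S) :
    chainPow (randomMapKernel μ f) t y s
      = ∑ p, chainPow (randomMapCoupling μ f) t (x, y) p * if p.2 = s then 1 else 0 := by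
  have h := sum_chainPow_randomMapKernel_comp μ (F := fun ω p => (f ω p.1, f ω p.2))
    (h := Prod.snd) (fun _ _ => rfl) t (x, y) fun s' => if s' = s then (1 : ℝ) else 0
  simpa [randomMapCoupling] using h.symm

lemma tvDist_chainPow_randomMapKernel_le (μ : Ω → ℝ) (f : Ω → S → S) (t : ℕ) (x y : S)
    (hρ : ∀ p, 0 ≤ chainPow (randomMapCoupling μ f) t (x, y) p) :
    tvDist (chainPow (randomMapKernel μ f) t x) (chainPow (randomMapKernel μ f) t y)
      ≤ ∑ p, chainPow (randomMapCoupling μ f) t (x, y) p * if p.1 = p.2 then 0 else 1 := by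
  simp only [funext (chainPow_randomMapKernel_eq_fst μ f t x y),
    funext (chainPow_randomMapKernel_eq_snd μ f t x y)]
  exact tvDist_le_of_coupling _ hρ

end RandomMap

section Potential

variable {W : Type*} [Fintype W] (G : SimpleGraph W) [DecidableRel G.Adj]

lemma sum_mul_sum_neighborFinset_comm (f g : W → ℝ) :
    ∑ v, f v * ∑ w ∈ G.neighborFinset v, g w = ∑ w, g w * ∑ v ∈ G.neighborFinset w, f v := by
  simp only [mul_sum, SimpleGraph.neighborFinset_eq_filter, sum_filter]
  rw [sum_comm]
  refine sum_congr rfl fun w _ => sum_congr rfl fun v _ => ?_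
  simp only [G.adj_comm v w]
  split_ifs <;> ring

lemma sum_div_le_of_local_contraction {d d' q p : W → ℝ} {qmin b : ℝ} (hd : ∀ v, 0 ≤ d v)
    (hq : ∀ v, 0 < q v) (hqmin : ∀ v, qmin ≤ q v)
    (hp : ∀ v, ∑ w ∈ G.neighborFinset v, p w ≤ b) (hb : b ≤ 1)
    (hd' : ∀ v, d' v ≤ (1 - q v) * d v + q v * p v * ∑ w ∈ G.neighborFinset v, d w) :
    ∑ v, d' v / q v ≤ (1 - qmin * (1 - b)) * ∑ v, d v / q v := by
  have hpoint : ∀ v, d' v / q v ≤ d v / q v - d v + p v * ∑ w ∈ G.neighborFinset v, d w := by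
    intro v
    rw [div_le_iff₀ (hq v)]
    calc d' v ≤ (1 - q v) * d v + q v * p v * ∑ w ∈ G.neighborFinset v, d w := hd' v
      _ = (d v / q v - d v + p v * ∑ w ∈ G.neighborFinset v, d w) * q v := by
        field_simp [(hq v).ne']
  have hneighbors : ∑ v, p v * ∑ w ∈ G.neighborFinset v, d w ≤ b * ∑ v, d v := by
    rw [sum_mul_sum_neighborFinset_comm, mul_sum]
    exact sum_le_sum fun w _ => by rw [mul_comm b]; exact mul_le_mul_of_nonneg_left (hp w) (hd w)
  have hmass : qmin * ∑ v, d v / q v ≤ ∑ v, d v := by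
    rw [mul_sum]
    refine sum_le_sum fun v _ => ?_
    calc qmin * (d v / q v) ≤ q v * (d v / q v) :=
          mul_le_mul_of_nonneg_right (hqmin v) (div_nonneg (hd v) (hq v).le)
      _ = d v := mul_div_cancel₀ _ (hq v).ne'
  have hmass' := mul_le_mul_of_nonneg_left hmass (sub_nonneg.mpr hb)
  calc ∑ v, d' v / q v
      ≤ ∑ v, (d v / q v - d v + p v * ∑ w ∈ G.neighborFinset v, d w) :=
        sum_le_sum fun v _ => hpoint v
    _ = ∑ v, d v / q v - ∑ v, d v + ∑ v, p v * ∑ w ∈ G.neighborFinset v, d w := by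
        rw [sum_add_distrib, sum_sub_distrib]
    _ ≤ (1 - qmin * (1 - b)) * ∑ v, d v / q v := by linarith

lemma sum_le_mul_sum_div {d q : W → ℝ} {qmax : ℝ} (hd : ∀ v, 0 ≤ d v) (hq : ∀ v, 0 < q v)
    (hqmax : ∀ v, q v ≤ qmax) : ∑ v, d v ≤ qmax * ∑ v, d v / q v := by
  rw [mul_sum]
  refine sum_le_sum fun v _ => ?_
  calc d v = q v * (d v / q v) := (mul_div_cancel₀ _ (hq v).ne').symm
    _ ≤ qmax * (d v / q v) := mul_le_mul_of_nonneg_right (hqmax v) (div_nonneg (hd v) (hq v).le)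

end Potential

lemma mul_one_sub_pow_ceil_le_exp_neg_one {c κ : ℝ} (hc : 0 < c) (hκ0 : 0 < κ) (hκ1 : κ ≤ 1) :
    c * (1 - κ) ^ ⌈Real.log (c * Real.exp 1) / κ⌉₊ ≤ 1 / Real.exp 1 := by
  set T := ⌈Real.log (c * Real.exp 1) / κ⌉₊
  have hT : Real.log c + 1 ≤ κ * T := by
    have h : Real.log (c * Real.exp 1) / κ ≤ T := Nat.le_ceil _
    rw [Real.log_mul hc.ne' (Real.exp_pos 1).ne', Real.log_exp, div_le_iff₀ hκ0] at h
    linarith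
  calc c * (1 - κ) ^ T ≤ c * Real.exp (-κ) ^ T := by
        gcongr
        linarith [Real.add_one_le_exp (-κ)]
    _ = Real.exp (Real.log c - κ * T) := by
        rw [← Real.exp_nat_mul, Real.exp_sub, Real.exp_log hc, div_eq_mul_inv, ← Real.exp_neg]
        ring_nf
    _ ≤ Real.exp (-1) := Real.exp_le_exp.mpr (by linarith)
    _ = 1 / Real.exp 1 := by rw [Real.exp_neg, one_div]

/-- Under a product of probability vectors `c u`, the coordinate `a v` has law `c v`. -/
lemma sum_prod_mul_apply (c : V → Bool → ℝ) (hc : ∀ u, ∑ b, c u b = 1) (v : V)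
    (g : Bool → ℝ) : ∑ a : V → Bool, (∏ u, c u (a u)) * g (a v) = ∑ b, c v b * g b := by
  have hsplit : ∀ a : V → Bool,
      (∏ u, c u (a u)) * g (a v) = ∏ u, c u (a u) * if u = v then g (a u) else 1 := by
    intro a
    rw [prod_mul_distrib, prod_ite_eq']
    simp
  have hfactor : ∀ u, ∑ b, c u b * (if u = v then g b else 1)
      = if u = v then ∑ b, c v b * g b else 1 := by
    intro u
    split_ifs with hu
    · subst hu; rfl
    · simpa using hc u
  simp only [hsplit]
  rw [← Fintype.prod_sum fun u b => c u b * if u = v then g b else 1]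
  simp only [hfactor, prod_ite_eq', mem_univ, if_true]

section PGDRandomMap

variable (G : SimpleGraph V) [DecidableRel G.Adj] {lam : V → ℝ} {q : Finset V → ℝ}

/-- The law of a vertex's coin; `true` means that the vertex tries to become active. -/
noncomputable def coinProb (l : ℝ) (c : Bool) : ℝ :=
  if c then l / (1 + l) else 1 / (1 + l)

lemma coinProb_nonneg {l : ℝ} (hl : 0 ≤ l) (c : Bool) : 0 ≤ coinProb l c := by
  unfold coinProb
  split_ifs <;> positivity

lemma div_add_inv_self_eq_one {l : ℝ} (hl : 1 + l ≠ 0) : l / (1 + l) + (1 + l)⁻¹ = 1 := by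
  rw [← one_div, ← add_div, add_comm, div_self hl]

lemma sum_coinProb {l : ℝ} (hl : 1 + l ≠ 0) : ∑ c, coinProb l c = 1 := by
  simpa [coinProb] using div_add_inv_self_eq_one hl

variable (lam q) in
/-- One PGD step is driven by a decision schedule and an independent coin at every vertex. -/
noncomputable def pgdNoise (ω : Finset V × (V → Bool)) : ℝ :=
  q ω.1 * ∏ v, coinProb (lam v) (ω.2 v)

abbrev IsActiveNext (m σ : Finset V) (v : V) (c : Bool) : Prop :=
  if v ∈ m then c = true ∧ ¬∃ w ∈ σ, G.Adj v w else v ∈ σ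

def pgdUpdate (ω : Finset V × (V → Bool)) (σ : Finset V) : Finset V :=
  univ.filter fun v => IsActiveNext G ω.1 σ v (ω.2 v)

lemma sum_mul_ite_mem (hqsum : ∑ m, q m = 1) (v : V) (x y : ℝ) :
    ∑ m, q m * (if v ∈ m then x else y) = qVert q v * x + (1 - qVert q v) * y := by
  have hcompl : ∑ m ∈ univ.filter (v ∉ ·), q m = 1 - qVert q v := by
    rw [qVert, ← hqsum, ← sum_filter_add_sum_filter_not univ (v ∈ ·) q]
    ring
  simp only [mul_ite, sum_ite, ← sum_mul, hcompl, qVert]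

lemma qVert_le_one (hq0 : ∀ m, 0 ≤ q m) (hqsum : ∑ m, q m = 1) (v : V) : qVert q v ≤ 1 :=
  hqsum ▸ sum_le_sum_of_subset_of_nonneg (filter_subset _ _) fun m _ _ => hq0 m

lemma sum_pgdNoise_mul_ite (hlam : ∀ v, 1 + lam v ≠ 0) (hqsum : ∑ m, q m = 1) (v : V)
    (f : Bool → ℝ) (y : ℝ) :
    ∑ ω, pgdNoise lam q ω * (if v ∈ ω.1 then f (ω.2 v) else y)
      = qVert q v * ∑ c, coinProb (lam v) c * f c + (1 - qVert q v) * y := by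
  have hcoins : ∀ m : Finset V, ∑ a : V → Bool,
      (∏ u, coinProb (lam u) (a u)) * (if v ∈ m then f (a v) else y)
      = if v ∈ m then ∑ c, coinProb (lam v) c * f c else y := by
    intro m
    rw [sum_prod_mul_apply _ (fun u => sum_coinProb (hlam u)) v fun c => if v ∈ m then f c else y]
    split_ifs
    · rfl
    · rw [← sum_mul, sum_coinProb (hlam v), one_mul]
  simp only [Fintype.sum_prod_type, pgdNoise, mul_assoc, ← mul_sum, hcoins]
  exact sum_mul_ite_mem hqsum v _ _

lemma sum_pgdNoise (hlam : ∀ v, 1 + lam v ≠ 0) (hqsum : ∑ m, q m = 1) :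
    ∑ ω, pgdNoise lam q ω = 1 := by
  simp only [Fintype.sum_prod_type, pgdNoise, ← mul_sum, ← Fintype.prod_sum,
    sum_coinProb (hlam _), prod_const_one, mul_one, hqsum]

lemma pgdP_eq_randomMapKernel (hlam : ∀ v, 1 + lam v ≠ 0) :
    pgdP G lam q = randomMapKernel (pgdNoise lam q) (pgdUpdate G) := by
  funext σ σ'
  have hstep : ∀ m v, stepFactor G lam σ m σ' v
      = ∑ c, coinProb (lam v) c * if (IsActiveNext G m σ v c ↔ v ∈ σ') then 1 else 0 := by
    intro m v
    have h := div_add_inv_self_eq_one (hlam v)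
    unfold stepFactor
    by_cases hm : v ∈ m <;> by_cases hb : ∃ w ∈ σ, G.Adj v w <;> by_cases h' : v ∈ σ' <;>
      by_cases hσ : v ∈ σ <;> simp [IsActiveNext, hm, hb, h', hσ, coinProb, h]
  have hupdate : ∀ ω : Finset V × (V → Bool), (if pgdUpdate G ω σ = σ' then pgdNoise lam q ω else 0)
      = q ω.1 * ∏ v, coinProb (lam v) (ω.2 v) *
          if (IsActiveNext G ω.1 σ v (ω.2 v) ↔ v ∈ σ') then 1 else 0 := by
    intro ω
    have hF : pgdUpdate G ω σ = σ' ↔ ∀ v, (IsActiveNext G ω.1 σ v (ω.2 v) ↔ v ∈ σ') := by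
      simp only [pgdUpdate, Finset.ext_iff, mem_filter, mem_univ, true_and]
    rw [prod_mul_distrib, Fintype.prod_boole, pgdNoise]
    by_cases h : pgdUpdate G ω σ = σ'
    · rw [if_pos h, if_pos (hF.mp h), mul_one]
    · rw [if_neg h, if_neg (mt hF.mpr h), mul_zero, mul_zero]
  simp only [pgdP, randomMapKernel, hupdate, Fintype.sum_prod_type, ← mul_sum,
    hstep, Fintype.prod_sum]

lemma mem_symmDiff_pgdUpdate (ω : Finset V × (V → Bool)) (σ τ : Finset V) (v : V) :
    v ∈ pgdUpdate G ω σ ∆ pgdUpdate G ω τ ↔ if v ∈ ω.1 then ω.2 v = true ∧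
      ¬((∃ w ∈ σ, G.Adj v w) ↔ ∃ w ∈ τ, G.Adj v w) else v ∈ σ ∆ τ := by
  simp only [pgdUpdate, IsActiveNext, mem_symmDiff, mem_filter, mem_univ, true_and]
  split_ifs
  · by_cases hσ : ∃ w ∈ σ, G.Adj v w <;> by_cases hτ : ∃ w ∈ τ, G.Adj v w <;> simp [hσ, hτ]
  · rfl

lemma sum_pgdNoise_mul_mem_symmDiff (hlam : ∀ v, 1 + lam v ≠ 0) (hqsum : ∑ m, q m = 1)
    (σ τ : Finset V) (v : V) :
    ∑ ω, pgdNoise lam q ω * (if v ∈ pgdUpdate G ω σ ∆ pgdUpdate G ω τ then 1 else 0)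
      = (1 - qVert q v) * (if v ∈ σ ∆ τ then 1 else 0) + qVert q v * (lam v / (1 + lam v)) *
        if ((∃ w ∈ σ, G.Adj v w) ↔ ∃ w ∈ τ, G.Adj v w) then 0 else 1 := by
  set f : Bool → ℝ := fun c =>
    if c = true ∧ ¬((∃ w ∈ σ, G.Adj v w) ↔ ∃ w ∈ τ, G.Adj v w) then 1 else 0
  have hsplit : ∀ ω : Finset V × (V → Bool),
      (if v ∈ pgdUpdate G ω σ ∆ pgdUpdate G ω τ then (1 : ℝ) else 0)
      = if v ∈ ω.1 then f (ω.2 v) else if v ∈ σ ∆ τ then 1 else 0 := by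
    intro ω
    by_cases hm : v ∈ ω.1 <;> simp only [f, mem_symmDiff_pgdUpdate, hm, if_true, if_false]
  simp only [hsplit]
  rw [sum_pgdNoise_mul_ite hlam hqsum v]
  by_cases hb : (∃ w ∈ σ, G.Adj v w) ↔ ∃ w ∈ τ, G.Adj v w
  · simp [f, hb]
  · simp [f, hb, coinProb]
    ring

lemma ite_iff_exists_adj_le_sum_neighborFinset (σ τ : Finset V) (v : V) :
    (if ((∃ w ∈ σ, G.Adj v w) ↔ ∃ w ∈ τ, G.Adj v w) then 0 else 1 : ℝ)
      ≤ ∑ w ∈ G.neighborFinset v, if w ∈ σ ∆ τ then 1 else 0 := by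
  have hnonneg : ∀ w ∈ G.neighborFinset v, (0 : ℝ) ≤ if w ∈ σ ∆ τ then 1 else 0 :=
    fun w _ => ite_nonneg zero_le_one le_rfl
  split_ifs with hb
  · exact sum_nonneg hnonneg
  · obtain ⟨w, hadj, hw⟩ : ∃ w, G.Adj v w ∧ w ∈ σ ∆ τ := by
      by_contra! hc
      refine hb ⟨fun ⟨w, hw, hadj⟩ => ⟨w, ?_, hadj⟩, fun ⟨w, hw, hadj⟩ => ⟨w, ?_, hadj⟩⟩ <;>
        have := hc w hadj <;> simp only [mem_symmDiff] at this <;> tauto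
    calc (1 : ℝ) = if w ∈ σ ∆ τ then 1 else 0 := by rw [if_pos hw]
      _ ≤ _ := single_le_sum hnonneg ((G.mem_neighborFinset v w).mpr hadj)

lemma ite_eq_le_sum_mem_symmDiff (σ τ : Finset V) :
    (if σ = τ then 0 else 1 : ℝ) ≤ ∑ v, if v ∈ σ ∆ τ then 1 else 0 := by
  split_ifs with h
  · exact sum_nonneg fun v _ => ite_nonneg zero_le_one le_rfl
  · obtain ⟨v, hv⟩ := symmDiff_nonempty.mpr h
    calc (1 : ℝ) = if v ∈ σ ∆ τ then 1 else 0 := by rw [if_pos hv]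
      _ ≤ _ := single_le_sum (fun w _ => ite_nonneg zero_le_one le_rfl) (mem_univ v)

variable (lam q) in
/-- Probability that the grand coupling of the PGD started from `x` and `y` disagrees at `v` at
time `t`. -/
noncomputable def disagreementProb (x y : Finset V) (t : ℕ) (v : V) : ℝ :=
  ∑ p, chainPow (randomMapCoupling (pgdNoise lam q) (pgdUpdate G)) t (x, y) p *
    if v ∈ p.1 ∆ p.2 then 1 else 0

lemma chainPow_pgdCoupling_nonneg (hlam : ∀ v, 0 ≤ lam v) (hq0 : ∀ m, 0 ≤ q m) (t : ℕ)
    (p p' : Finset V × Finset V) :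
    0 ≤ chainPow (randomMapCoupling (pgdNoise lam q) (pgdUpdate G)) t p p' :=
  chainPow_nonneg (randomMapKernel_nonneg
    (fun _ => mul_nonneg (hq0 _) (prod_nonneg fun v _ => coinProb_nonneg (hlam v) _)) _) t p p'

lemma disagreementProb_nonneg (hlam : ∀ v, 0 ≤ lam v) (hq0 : ∀ m, 0 ≤ q m)
    (x y : Finset V) (t : ℕ) (v : V) : 0 ≤ disagreementProb G lam q x y t v :=
  sum_nonneg fun p _ =>
    mul_nonneg (chainPow_pgdCoupling_nonneg G hlam hq0 t _ p) (ite_nonneg zero_le_one le_rfl)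

lemma disagreementProb_zero_le_one (x y : Finset V) (v : V) :
    disagreementProb G lam q x y 0 v ≤ 1 := by
  rw [disagreementProb, sum_chainPow_zero_mul]
  split_ifs <;> norm_num

lemma disagreementProb_succ_le (hlam : ∀ v, 0 < lam v) (hq0 : ∀ m, 0 ≤ q m)
    (hqsum : ∑ m, q m = 1) (x y : Finset V) (t : ℕ) (v : V) :
    disagreementProb G lam q x y (t + 1) v ≤ (1 - qVert q v) * disagreementProb G lam q x y t v
      + qVert q v * (lam v / (1 + lam v)) *
        ∑ w ∈ G.neighborFinset v, disagreementProb G lam q x y t w := by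
  set ρ := chainPow (randomMapCoupling (pgdNoise lam q) (pgdUpdate G)) t (x, y)
  have hρ : ∀ p, 0 ≤ ρ p := chainPow_pgdCoupling_nonneg G (fun v => (hlam v).le) hq0 t _
  have hne : ∀ v, 1 + lam v ≠ 0 := fun v => by linarith [hlam v]
  calc disagreementProb G lam q x y (t + 1) v
      = ∑ p, ρ p * ∑ ω, pgdNoise lam q ω *
          (if v ∈ pgdUpdate G ω p.1 ∆ pgdUpdate G ω p.2 then 1 else 0) := by
        rw [disagreementProb, sum_chainPow_succ_mul, randomMapCoupling]
        simp only [sum_randomMapKernel_mul]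
        rfl
    _ ≤ ∑ p, ρ p * ((1 - qVert q v) * (if v ∈ p.1 ∆ p.2 then 1 else 0) +
          qVert q v * (lam v / (1 + lam v)) *
            ∑ w ∈ G.neighborFinset v, if w ∈ p.1 ∆ p.2 then 1 else 0) := by
        gcongr with p
        · exact hρ p
        rw [sum_pgdNoise_mul_mem_symmDiff G hne hqsum]
        have hq : 0 ≤ qVert q v := sum_nonneg fun m _ => hq0 m
        have hp := div_nonneg (hlam v).le (by linarith [hlam v] : (0 : ℝ) ≤ 1 + lam v)
        gcongr
        exact ite_iff_exists_adj_le_sum_neighborFinset G p.1 p.2 v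
    _ = _ := by
        simp only [disagreementProb, mul_add, sum_add_distrib, mul_sum]
        rw [sum_comm (s := univ)]
        congr 1 <;> refine sum_congr rfl fun _ _ => ?_
        · ring
        · exact sum_congr rfl fun _ _ => by ring

lemma sum_disagreementProb_div_le (hlam : ∀ v, 0 < lam v) (hq0 : ∀ m, 0 ≤ q m)
    (hqsum : ∑ m, q m = 1) (hqv : ∀ v, 0 < qVert q v) {qmin b : ℝ} (hqmin0 : 0 < qmin)
    (hqmin : ∀ v, qmin ≤ qVert q v) (hb : ∀ v, ∑ w ∈ G.neighborFinset v, lam w / (1 + lam w) ≤ b)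
    (hb1 : b ≤ 1) (hκ : qmin * (1 - b) ≤ 1) (x y : Finset V) (t : ℕ) :
    ∑ v, disagreementProb G lam q x y t v / qVert q v
      ≤ (1 - qmin * (1 - b)) ^ t * (Fintype.card V / qmin) := by
  induction t with
  | zero =>
    calc ∑ v, disagreementProb G lam q x y 0 v / qVert q v ≤ ∑ _v : V, 1 / qmin :=
          sum_le_sum fun v _ =>
            div_le_div₀ zero_le_one (disagreementProb_zero_le_one G x y v) hqmin0 (hqmin v)
      _ = _ := by simp [div_eq_mul_inv]
  | succ t ih =>
    calc ∑ v, disagreementProb G lam q x y (t + 1) v / qVert q v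
        ≤ (1 - qmin * (1 - b)) * ∑ v, disagreementProb G lam q x y t v / qVert q v :=
          sum_div_le_of_local_contraction G
            (disagreementProb_nonneg G (fun v => (hlam v).le) hq0 x y t) hqv hqmin hb hb1
            (disagreementProb_succ_le G hlam hq0 hqsum x y t)
      _ ≤ (1 - qmin * (1 - b)) * ((1 - qmin * (1 - b)) ^ t * (Fintype.card V / qmin)) :=
          mul_le_mul_of_nonneg_left ih (sub_nonneg.mpr hκ)
      _ = _ := by ring

lemma tvDist_chainPow_pgdP_le_sum_disagreementProb (hlam : ∀ v, 0 < lam v)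
    (hq0 : ∀ m, 0 ≤ q m) (x y : Finset V) (t : ℕ) :
    tvDist (chainPow (pgdP G lam q) t x) (chainPow (pgdP G lam q) t y)
      ≤ ∑ v, disagreementProb G lam q x y t v := by
  have hρ := chainPow_pgdCoupling_nonneg G (fun v => (hlam v).le) hq0 t (x, y)
  rw [pgdP_eq_randomMapKernel G fun v => by linarith [hlam v]]
  refine (tvDist_chainPow_randomMapKernel_le _ _ t x y hρ).trans ?_
  simp only [disagreementProb]
  rw [sum_comm]
  simp only [← mul_sum]
  exact sum_le_sum fun p _ => mul_le_mul_of_nonneg_left (ite_eq_le_sum_mem_symmDiff p.1 p.2) (hρ p)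

end PGDRandomMap

section Reversibility

variable (G : SimpleGraph V) [DecidableRel G.Adj] {lam : V → ℝ} {q : Finset V → ℝ}

lemma isInd_pgdUpdate {ω : Finset V × (V → Bool)} {σ : Finset V} (hm : IsInd G ω.1)
    (hσ : IsInd G σ) : IsInd G (pgdUpdate G ω σ) := by
  intro u hu v hv huv
  simp only [pgdUpdate, IsActiveNext, mem_filter, mem_univ, true_and] at hu hv
  split_ifs at hu hv with hum hvm hvm
  · exact hm u hum v hvm huv
  · exact hu.2 ⟨v, hv, huv⟩
  · exact hv.2 ⟨u, hu, huv.symm⟩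
  · exact hσ u hu v hv huv

lemma pgdP_eq_zero_of_not_isInd (hlam : ∀ v, 1 + lam v ≠ 0) (hqsupp : ∀ m, ¬ IsInd G m → q m = 0)
    {σ σ' : Finset V} (hσ : IsInd G σ) (hσ' : ¬ IsInd G σ') : pgdP G lam q σ σ' = 0 := by
  rw [pgdP_eq_randomMapKernel G hlam]
  refine sum_eq_zero fun ω _ => ?_
  by_cases hm : IsInd G ω.1
  · rw [if_neg]
    rintro rfl
    exact hσ' (isInd_pgdUpdate G hm hσ)
  · simp [pgdNoise, hqsupp _ hm]

lemma ite_mem_mul_stepFactor_comm {U : Type*} [DecidableEq U] (G : SimpleGraph U)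
    [DecidableRel G.Adj] (lam : U → ℝ) {σ σ' m : Finset U} (hσ : IsInd G σ) (hσ' : IsInd G σ')
    {v : U} (hblocked : v ∈ m → ((∃ w ∈ σ, G.Adj v w) ↔ ∃ w ∈ σ', G.Adj v w)) :
    (if v ∈ σ then lam v else 1) * stepFactor G lam σ m σ' v
      = (if v ∈ σ' then lam v else 1) * stepFactor G lam σ' m σ v := by
  have hfree : v ∈ σ → ¬∃ w ∈ σ, G.Adj v w := fun hv ⟨w, hw, h⟩ => hσ v hv w hw h
  have hfree' : v ∈ σ' → ¬∃ w ∈ σ', G.Adj v w := fun hv ⟨w, hw, h⟩ => hσ' v hv w hw h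
  unfold stepFactor
  by_cases hvm : v ∈ m
  · have hb := hblocked hvm
    by_cases hbσ : ∃ w ∈ σ, G.Adj v w
    · have hv : v ∉ σ := fun h => hfree h hbσ
      have hv' : v ∉ σ' := fun h => hfree' h (hb.mp hbσ)
      rw [if_pos hvm, if_pos hvm, if_pos hbσ, if_pos (hb.mp hbσ), if_neg hv, if_neg hv,
        if_neg hv', if_neg hv']
    · have hbσ' : ¬∃ w ∈ σ', G.Adj v w := fun h => hbσ (hb.mpr h)
      rw [if_pos hvm, if_pos hvm, if_neg hbσ, if_neg hbσ']
      split_ifs <;> ring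
  · rw [if_neg hvm, if_neg hvm]
    by_cases hv : v ∈ σ <;> by_cases hv' : v ∈ σ' <;> simp [hv, hv']

lemma prod_mul_prod_stepFactor_comm {σ σ' m : Finset V} (hm : IsInd G m) (hσ : IsInd G σ)
    (hσ' : IsInd G σ') :
    (∏ v ∈ σ, lam v) * ∏ v, stepFactor G lam σ m σ' v
      = (∏ v ∈ σ', lam v) * ∏ v, stepFactor G lam σ' m σ v := by
  by_cases hagree : ∀ v ∉ m, (v ∈ σ ↔ v ∈ σ')
  · have hblocked : ∀ v ∈ m, ((∃ w ∈ σ, G.Adj v w) ↔ ∃ w ∈ σ', G.Adj v w) := by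
      intro v hv
      have hout : ∀ w, G.Adj v w → w ∉ m := fun w h hw => hm v hv w hw h
      exact ⟨fun ⟨w, hw, h⟩ => ⟨w, (hagree w (hout w h)).mp hw, h⟩,
        fun ⟨w, hw, h⟩ => ⟨w, (hagree w (hout w h)).mpr hw, h⟩⟩
    have hprod : ∀ s : Finset V, ∏ v ∈ s, lam v = ∏ v, if v ∈ s then lam v else 1 :=
      fun s => by rw [prod_ite_mem, univ_inter]
    rw [hprod σ, hprod σ', ← prod_mul_distrib, ← prod_mul_distrib]
    exact prod_congr rfl fun v _ => ite_mem_mul_stepFactor_comm G lam hσ hσ' (hblocked v)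
  · simp only [not_forall] at hagree
    obtain ⟨v, hvm, hv⟩ := hagree
    have h : stepFactor G lam σ m σ' v = 0 := by
      rw [stepFactor, if_neg hvm, if_neg]
      tauto
    have h' : stepFactor G lam σ' m σ v = 0 := by
      rw [stepFactor, if_neg hvm, if_neg]
      tauto
    rw [prod_eq_zero (mem_univ v) h, prod_eq_zero (mem_univ v) h', mul_zero, mul_zero]

lemma prodForm_mul_pgdP_comm (hlam : ∀ v, 1 + lam v ≠ 0) (hqsupp : ∀ m, ¬ IsInd G m → q m = 0)
    (σ σ' : Finset V) :
    prodForm G lam σ * pgdP G lam q σ σ' = prodForm G lam σ' * pgdP G lam q σ' σ := by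
  by_cases hσ : IsInd G σ <;> by_cases hσ' : IsInd G σ'
  · simp only [prodForm, if_pos hσ, if_pos hσ', pgdP, mul_sum, div_mul_eq_mul_div]
    refine sum_congr rfl fun m _ => ?_
    by_cases hm : IsInd G m
    · rw [mul_left_comm, prod_mul_prod_stepFactor_comm G hm hσ hσ', mul_left_comm]
    · simp [hqsupp m hm]
  · simp [prodForm, hσ', pgdP_eq_zero_of_not_isInd G hlam hqsupp hσ hσ']
  · simp [prodForm, hσ, pgdP_eq_zero_of_not_isInd G hlam hqsupp hσ' hσ]
  · simp [prodForm, hσ, hσ']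

lemma sum_pgdP (hlam : ∀ v, 1 + lam v ≠ 0) (hqsum : ∑ m, q m = 1) (σ : Finset V) :
    ∑ σ', pgdP G lam q σ σ' = 1 := by
  have h := sum_randomMapKernel_mul (pgdNoise lam q) (pgdUpdate G) σ fun _ => 1
  simp only [mul_one] at h
  rw [pgdP_eq_randomMapKernel G hlam, h, sum_pgdNoise hlam hqsum]

lemma prodForm_nonneg (hlam : ∀ v, 0 ≤ lam v) (σ : Finset V) : 0 ≤ prodForm G lam σ := by
  unfold prodForm
  split_ifs
  · exact div_nonneg (prod_nonneg fun v _ => hlam v)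
      (sum_nonneg fun s _ => prod_nonneg fun v _ => hlam v)
  · rfl

lemma sum_prodForm (hlam : ∀ v, 0 ≤ lam v) : ∑ σ, prodForm G lam σ = 1 := by
  have hZ : 0 < ∑ s ∈ univ.filter (IsInd G), ∏ v ∈ s, lam v := by
    have hempty : (∅ : Finset V) ∈ univ.filter (IsInd G) := by simp [IsInd]
    calc (0 : ℝ) < ∏ v ∈ (∅ : Finset V), lam v := by simp
      _ ≤ _ := single_le_sum (f := fun s => ∏ v ∈ s, lam v)
          (fun s _ => prod_nonneg fun v _ => hlam v) hempty
  simp only [prodForm]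
  rw [← sum_filter, ← sum_div, div_self hZ.ne']

end Reversibility

/-- Corollary 3 of the paper: with `q_min = min_v q_v`,
`q_max = max_v q_v`, `ξ = q_max/q_min`, if
`b = max_v Σ_{w∈N_v} λ_w/(1+λ_w) < 1`, then
`T_mix ≤ ⌈log(nξe) / (q_min (1-b))⌉`. -/
theorem pgd_fast_mixing_uniform_weights
    {V : Type*} [Fintype V] [DecidableEq V] [Nonempty V]
    (G : SimpleGraph V) [DecidableRel G.Adj]
    (lam : V → ℝ) (hlam : ∀ v, 0 < lam v)
    (q : Finset V → ℝ)
    (hq0 : ∀ m, 0 ≤ q m)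
    (hqsupp : ∀ m, ¬ IsInd G m → q m = 0)
    (hqsum : ∑ m : Finset V, q m = 1)
    (hqv : ∀ v, 0 < qVert q v)
    (qmin qmax ξ b : ℝ)
    (hqmin : qmin = univ.inf' univ_nonempty (fun v => qVert q v))
    (hqmax : qmax = univ.sup' univ_nonempty (fun v => qVert q v))
    (hξ : ξ = qmax / qmin)
    (hb : b = univ.sup' univ_nonempty (fun v =>
      ∑ w ∈ G.neighborFinset v, lam w / (1 + lam w)))
    (hb1 : b < 1) :
    mixTime (pgdP G lam q) (prodForm G lam) (univ.filter (fun s => IsInd G s)) ≤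
      ⌈Real.log ((Fintype.card V : ℝ) * ξ * Real.exp 1) / (qmin * (1 - b))⌉₊ := by
  have hqmin_le : ∀ v, qmin ≤ qVert q v := fun v => hqmin ▸ inf'_le _ (mem_univ v)
  have hqmax_ge : ∀ v, qVert q v ≤ qmax :=
    fun v => hqmax ▸ le_sup' (fun v => qVert q v) (mem_univ v)
  have hb_ge : ∀ v, ∑ w ∈ G.neighborFinset v, lam w / (1 + lam w) ≤ b :=
    fun v => hb ▸ le_sup' (fun v => ∑ w ∈ G.neighborFinset v, lam w / (1 + lam w)) (mem_univ v)
  have hqmin0 : 0 < qmin := by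
    obtain ⟨v, -, hv⟩ := exists_mem_eq_inf' univ_nonempty fun v => qVert q v
    exact hqmin ▸ hv ▸ hqv v
  obtain ⟨v₀⟩ := ‹Nonempty V›
  have hb0 : 0 ≤ b :=
    (sum_nonneg fun w _ => div_nonneg (hlam w).le (by linarith [hlam w])).trans (hb_ge v₀)
  have hκ0 : 0 < qmin * (1 - b) := mul_pos hqmin0 (by linarith)
  have hκ1 : qmin * (1 - b) ≤ 1 := by nlinarith [hqmin_le v₀, qVert_le_one hq0 hqsum v₀]
  have hξ0 : 0 < ξ := hξ ▸ div_pos ((hqv v₀).trans_le (hqmax_ge v₀)) hqmin0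
  have hne : ∀ v, 1 + lam v ≠ 0 := fun v => by linarith [hlam v]
  have hstat :=
    sum_mul_eq_of_reversible (prodForm_mul_pgdP_comm G hne hqsupp) (sum_pgdP G hne hqsum)
  refine Finset.sup_le fun x _ => Nat.sInf_le ?_
  refine tvDist_chainDist_le_of_stationary _ (prodForm_nonneg G fun v => (hlam v).le)
    (sum_prodForm G fun v => (hlam v).le) hstat x _ fun y => ?_
  calc _ ≤ ∑ v, disagreementProb G lam q x y _ v :=
        tvDist_chainPow_pgdP_le_sum_disagreementProb G hlam hq0 x y _
    _ ≤ qmax * ∑ v, disagreementProb G lam q x y _ v / qVert q v :=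
        sum_le_mul_sum_div (disagreementProb_nonneg G (fun v => (hlam v).le) hq0 x y _) hqv hqmax_ge
    _ ≤ qmax * ((1 - qmin * (1 - b)) ^ _ * (Fintype.card V / qmin)) := by
        gcongr
        · exact (hqv v₀).le.trans (hqmax_ge v₀)
        · exact sum_disagreementProb_div_le G hlam hq0 hqsum hqv hqmin0 hqmin_le hb_ge hb1.le hκ1
            x y _
    _ = Fintype.card V * ξ * (1 - qmin * (1 - b)) ^ _ := by
        rw [hξ]
        field_simp
    _ ≤ 1 / Real.exp 1 := mul_one_sub_pow_ceil_le_exp_neg_one (by positivity) hκ0 hκ1
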